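/- Let m ≥ 1 and let A, B, C, C' be m×m matrices over F₂ such that the digital nets generated by (A, B, C) and by (A, B, C') are both (0,m,3)-nets over F₂. Let c_j and c'_j denote the j-th rows of C and C' respectively. Then for every 1 ≤ j ≤ m, the F₂-subspaces span{c_1,…,c_j} and span{c'_1,…,c'_j} of F₂^m are equal. -/

import Mathlib

open Matrix

/-- The vector of binary digits of `l` (least significant first). -/
def digitsVec (m l : ℕ) : Fin m → ZMod 2 := fun k => if l.testBit k.val then 1 else 0

/-- The map φ sending a bit vector to a real number in [0,1). -/
noncomputable def phiMap (m : ℕ) (y : Fin m → ZMod 2) : ℝ :=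
  ∑ k : Fin m, ((y k).val : ℝ) / 2 ^ (k.val + 1)

/-- The digital net (as a multiset of `2^m` points in `[0,1)^s`) generated by
matrices `C 0, …, C (s-1)`. -/
noncomputable def digitalNet (m s : ℕ) (C : Fin s → Matrix (Fin m) (Fin m) (ZMod 2)) :
    Multiset (Fin s → ℝ) :=
  (Multiset.range (2 ^ m)).map fun l => fun j => phiMap m ((C j).mulVec (digitsVec m l))

open Classical in
/-- `P` is a `(t,m,s)`-net over `F₂`: every elementary interval of volume `2^{t-m}`
contains exactly `2^t` points of `P`, counted with multiplicity. -/
def IsNet (t m s : ℕ) (P : Multiset (Fin s → ℝ)) : Prop :=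
  ∀ d : Fin s → ℕ, (∑ i, d i) = m - t →
    ∀ a : Fin s → ℕ, (∀ i, a i < 2 ^ d i) →
      (P.countP fun x => ∀ i,
        ((a i : ℝ) / 2 ^ d i ≤ x i ∧ x i < ((a i : ℝ) + 1) / 2 ^ d i)) = 2 ^ t

/-- The anti-diagonal matrix `J_m` over `F₂`. -/
def Jmat (m : ℕ) : Matrix (Fin m) (Fin m) (ZMod 2) :=
  Matrix.of fun i j => if i.val + j.val = m - 1 then 1 else 0

/-- The upper-triangular Pascal matrix `P_m` over `F₂` (0-indexed entry `(i,j)` is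
`binom(j,i) mod 2`). -/
def Pmat (m : ℕ) : Matrix (Fin m) (Fin m) (ZMod 2) :=
  Matrix.of fun i j => ((j.val.choose i.val : ℕ) : ZMod 2)

/-- A matrix is lower triangular. -/
def IsLowerTri {m : ℕ} (L : Matrix (Fin m) (Fin m) (ZMod 2)) : Prop :=
  ∀ i j : Fin m, i < j → L i j = 0

/-- The set consisting of the first `n` rows of `M`. -/
def rowSet {m : ℕ} (M : Matrix (Fin m) (Fin m) (ZMod 2)) (n : ℕ) :
    Set (Fin m → ZMod 2) :=
  {x | ∃ r : Fin m, r.val < n ∧ x = M r}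

/-- The subspace `V_{i,j}` spanned by the first `i` rows of `A`, the first
`m−i−j−1` rows of `B` and the first `j` rows of `C`. -/
def Vsub {m : ℕ} (A B C : Matrix (Fin m) (Fin m) (ZMod 2)) (i j : ℕ) :
    Submodule (ZMod 2) (Fin m → ZMod 2) :=
  Submodule.span (ZMod 2) (rowSet A i ∪ rowSet B (m - i - j - 1) ∪ rowSet C j)

/-!
Let `M₁, …, Mₛ` generate a `(0,m,s)`-net and let `d₁ + ⋯ + dₛ = m`. The elementary box
`∏ [0, 2^{-dᵢ})` contains exactly one net point, the one with index `0`; since every digit vector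
occurs as an index, the only `v` annihilated by the first `dᵢ` rows of every `Mᵢ` is `0`. Hence
these `m` rows form a basis of `F₂^m`.

For `(A, B, C)` and `(A, B, C')`, suppose the first `k` rows of `C` and `C'` span the same space.
For `p + q + k + 1 = m` the first `p` rows of `A`, `q` rows of `B` and `k` rows of `C` span a
hyperplane `H` that misses both `C k` and `C' k`, and over `F₂` a hyperplane has a single
nontrivial coset, so `C k + C' k ∈ H`. Intersecting these hyperplanes one after another inside
the bases given by `p + 1` rows of `A`, `q + 1` rows of `B` and `k` rows of `C` leaves
`C k + C' k ∈ span (first k rows of C)`, and the induction on `k` goes through.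
-/

theorem LinearIndepOn.span_image_inter {R M ι : Type*} [Ring R] [AddCommGroup M] [Module R M]
    {v : ι → M} {s t : Set ι} (hv : LinearIndepOn R v (s ∪ t)) :
    Submodule.span R (v '' s) ⊓ Submodule.span R (v '' t) = Submodule.span R (v '' (s ∩ t)) := by
  refine le_antisymm (fun x ⟨hxs, hxt⟩ => ?_)
    (le_inf (Submodule.span_mono (Set.image_mono Set.inter_subset_left))
      (Submodule.span_mono (Set.image_mono Set.inter_subset_right)))
  have hdisj : Disjoint (Submodule.span R (v '' (s \ t))) (Submodule.span R (v '' t)) :=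
    ((linearIndepOn_union_iff Set.disjoint_sdiff_left).mp
      (hv.mono (Set.union_subset_union_left t Set.sdiff_subset))).2.2
  rw [← Set.inter_union_sdiff s t, Set.image_union, Submodule.span_union] at hxs
  obtain ⟨y, hy, z, hz, rfl⟩ := Submodule.mem_sup.mp hxs
  have hzt : z ∈ Submodule.span R (v '' t) := by
    simpa using Submodule.sub_mem _ hxt
      (Submodule.span_mono (Set.image_mono Set.inter_subset_right) hy)
  rw [Submodule.disjoint_def.mp hdisj z hz hzt, add_zero]
  exact hy

theorem add_mem_of_sup_span_singleton_eq_top {V : Type*} [AddCommGroup V] [Module (ZMod 2) V]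
    {H : Submodule (ZMod 2) V} {x y : V} (hx : H ⊔ Submodule.span (ZMod 2) {x} = ⊤)
    (hy : y ∉ H) : x + y ∈ H := by
  obtain ⟨h, hh, _, hc, rfl⟩ := Submodule.mem_sup.mp (hx ▸ Submodule.mem_top : y ∈ _)
  obtain ⟨c, rfl⟩ := Submodule.mem_span_singleton.mp hc
  rcases (by decide : ∀ c : ZMod 2, c = 0 ∨ c = 1) c with rfl | rfl
  · exact absurd (by simpa using hh) hy
  · rwa [one_smul, add_left_comm, ZModModule.add_self, add_zero]

theorem exists_digitsVec_eq (m : ℕ) (v : Fin m → ZMod 2) : ∃ l < 2 ^ m, digitsVec m l = v := by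
  refine ⟨finFunctionFinEquiv (v : Fin m → Fin 2), (finFunctionFinEquiv _).isLt,
    funext fun k => ?_⟩
  have hk : (finFunctionFinEquiv (v : Fin m → Fin 2) : ℕ) / 2 ^ k.val % 2 = (v k).val := by
    rw [← finFunctionFinEquiv_symm_apply_val]
    exact congrArg (fun f : Fin m → Fin 2 => (f k : ℕ)) (finFunctionFinEquiv.symm_apply_apply _)
  simp only [digitsVec, Nat.testBit_eq_decide_div_mod_eq, hk]
  generalize v k = z
  fin_cases z <;> rfl

theorem sum_Ico_half_pow_succ_lt {d m : ℕ} (hd : d ≤ m) :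
    ∑ k ∈ Finset.Ico d m, (1 / 2 : ℝ) ^ (k + 1) < (1 / 2) ^ d := by
  simp only [pow_succ, ← Finset.sum_mul, geom_sum_Ico' (by norm_num : (1 / 2 : ℝ) ≠ 1) hd]
  norm_num

theorem phiMap_nonneg (m : ℕ) (y : Fin m → ZMod 2) : 0 ≤ phiMap m y :=
  Finset.sum_nonneg fun _ _ => by positivity

theorem phiMap_lt_of_forall_lt_eq_zero {m d : ℕ} (hd : d ≤ m) {y : Fin m → ZMod 2}
    (hy : ∀ k : Fin m, k.val < d → y k = 0) : phiMap m y < 1 / 2 ^ d := by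
  have hterm : ∀ k : Fin m, ((y k).val : ℝ) / 2 ^ (k.val + 1) ≤
      if d ≤ k.val then (1 / 2 : ℝ) ^ (k.val + 1) else 0 := by
    intro k
    split_ifs with hk
    · rw [_root_.one_div_pow]
      gcongr
      exact_mod_cast Nat.le_of_lt_succ (ZMod.val_lt (y k))
    · simp [hy k (not_le.mp hk)]
  calc phiMap m y ≤ ∑ k : Fin m, if d ≤ k.val then (1 / 2 : ℝ) ^ (k.val + 1) else 0 :=
        Finset.sum_le_sum fun k _ => hterm k
    _ = ∑ k ∈ Finset.Ico d m, (1 / 2 : ℝ) ^ (k + 1) := by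
        rw [Fin.sum_univ_eq_sum_range (fun k => if d ≤ k then (1 / 2 : ℝ) ^ (k + 1) else 0),
          ← Finset.sum_filter, Finset.range_eq_Ico, Finset.Ico_filter_le, Nat.zero_max]
    _ < (1 / 2) ^ d := sum_Ico_half_pow_succ_lt hd
    _ = 1 / 2 ^ d := _root_.one_div_pow 2 d

theorem apply_le_of_sum_eq {s m : ℕ} {d : Fin s → ℕ} (hd : ∑ i, d i = m) (i : Fin s) : d i ≤ m :=
  hd ▸ Finset.single_le_sum (fun _ _ => Nat.zero_le _) (Finset.mem_univ i)

theorem eq_zero_of_isNet {m s : ℕ} {M : Fin s → Matrix (Fin m) (Fin m) (ZMod 2)}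
    (hM : IsNet 0 m s (digitalNet m s M)) {d : Fin s → ℕ} (hd : ∑ i, d i = m)
    {v : Fin m → ZMod 2} (hv : ∀ i (k : Fin m), k.val < d i → (M i *ᵥ v) k = 0) : v = 0 := by
  classical
  obtain ⟨l, hl, rfl⟩ := exists_digitsVec_eq m v
  have hzero : digitsVec m 0 = 0 := funext fun k => by simp [digitsVec]
  have hcount := hM d (by simpa using hd) 0 (fun i => by positivity)
  rw [digitalNet, Multiset.countP_map, ← Finset.range_val, ← Finset.filter_val,
    Finset.card_val] at hcount
  simp only [Pi.zero_apply, Nat.cast_zero, zero_div, zero_add] at hcount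
  have hbox : ∀ l' < 2 ^ m, (∀ i (k : Fin m), k.val < d i → (M i *ᵥ digitsVec m l') k = 0) →
      l' ∈ (Finset.range (2 ^ m)).filter fun l'' => ∀ i,
        0 ≤ phiMap m (M i *ᵥ digitsVec m l'') ∧ phiMap m (M i *ᵥ digitsVec m l'') < 1 / 2 ^ d i :=
    fun l' hl' hl'v => Finset.mem_filter.mpr ⟨Finset.mem_range.mpr hl', fun i =>
      ⟨phiMap_nonneg _ _, phiMap_lt_of_forall_lt_eq_zero (apply_le_of_sum_eq hd i) (hl'v i)⟩⟩
  by_contra hv0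
  have h2 : 1 < 2 ^ 0 := hcount ▸ Finset.one_lt_card.mpr
    ⟨0, hbox 0 (by positivity) (by simp [hzero]), l, hbox l hl hv,
      fun h => hv0 (by rw [← h, hzero])⟩
  exact absurd h2 (by norm_num)

def leadingRows {s m : ℕ} (d : Fin s → ℕ) : Set (Fin s × Fin m) := {x | x.2.val < d x.1}

def rowFamily {R : Type*} {s m : ℕ} (M : Fin s → Matrix (Fin m) (Fin m) R) (x : Fin s × Fin m) :
    Fin m → R :=
  M x.1 x.2

theorem card_leadingRows {s m : ℕ} {d : Fin s → ℕ} (hd : ∀ i, d i ≤ m) :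
    Nat.card (leadingRows (m := m) d) = ∑ i, d i := by
  classical
  rw [Nat.card_eq_card_toFinset, leadingRows, Set.toFinset_ofPred, Finset.card_filter,
    Fintype.sum_prod_type]
  refine Finset.sum_congr rfl fun i _ => ?_
  rw [← Finset.card_filter]
  exact Fin.card_filter_val_lt.trans (min_eq_right (hd i))

section IsNet

variable {m s : ℕ} {M : Fin s → Matrix (Fin m) (Fin m) (ZMod 2)} {d : Fin s → ℕ}

theorem finrank_span_leadingRows (hM : IsNet 0 m s (digitalNet m s M)) (hd : ∑ i, d i = m) :
    Module.finrank (ZMod 2) (Submodule.span (ZMod 2) (rowFamily M '' leadingRows d)) = m := by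
  set R : Matrix (leadingRows (m := m) d) (Fin m) (ZMod 2) := Matrix.of fun x => rowFamily M x
  have hinj : Function.Injective R.mulVecLin := by
    rw [← LinearMap.ker_eq_bot, Submodule.eq_bot_iff]
    exact fun v hv => eq_zero_of_isNet hM hd fun i k hk => congrFun hv ⟨(i, k), hk⟩
  have hrank : R.rank = m := by
    rw [Matrix.rank, LinearMap.finrank_range_of_inj hinj, Module.finrank_fin_fun]
  rw [Matrix.rank_eq_finrank_span_row] at hrank
  rwa [Set.image_eq_range]

theorem linearIndepOn_leadingRows (hM : IsNet 0 m s (digitalNet m s M)) (hd : ∑ i, d i = m) :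
    LinearIndepOn (ZMod 2) (rowFamily M) (leadingRows d) := by
  classical
  rw [LinearIndepOn, linearIndependent_iff_card_eq_finrank_span, Set.finrank,
    ← Set.image_eq_range, finrank_span_leadingRows hM hd, ← Nat.card_eq_fintype_card,
    card_leadingRows (apply_le_of_sum_eq hd), hd]

theorem span_leadingRows_eq_top (hM : IsNet 0 m s (digitalNet m s M)) (hd : ∑ i, d i = m) :
    Submodule.span (ZMod 2) (rowFamily M '' leadingRows d) = ⊤ :=
  Submodule.eq_top_of_finrank_eq (by rw [finrank_span_leadingRows hM hd, Module.finrank_fin_fun])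

end IsNet

theorem rowSet_zero {m : ℕ} (M : Matrix (Fin m) (Fin m) (ZMod 2)) : rowSet M 0 = ∅ :=
  Set.eq_empty_of_forall_notMem fun _ ⟨_, hk, _⟩ => Nat.not_lt_zero _ hk

theorem rowSet_succ {m : ℕ} (M : Matrix (Fin m) (Fin m) (ZMod 2)) (k : Fin m) :
    rowSet M (k.val + 1) = insert (M k) (rowSet M k) := by
  ext x
  constructor
  · rintro ⟨j, hj, rfl⟩
    rcases Nat.lt_succ_iff_lt_or_eq.mp hj with hj | hj
    exacts [Or.inr ⟨j, hj, rfl⟩, Or.inl (congrArg M (Fin.ext hj))]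
  · rintro (rfl | ⟨j, hj, rfl⟩)
    exacts [⟨k, k.val.lt_succ_self, rfl⟩, ⟨j, hj.trans k.val.lt_succ_self, rfl⟩]

section ThreeMatrices

variable {m : ℕ} {A B C C' : Matrix (Fin m) (Fin m) (ZMod 2)}

theorem image_leadingRows_three (p q r : ℕ) :
    rowFamily ![A, B, C] '' leadingRows ![p, q, r] = rowSet A p ∪ rowSet B q ∪ rowSet C r := by
  ext x
  constructor
  · rintro ⟨⟨i, k⟩, hk, rfl⟩
    fin_cases i
    exacts [Or.inl (Or.inl ⟨k, hk, rfl⟩), Or.inl (Or.inr ⟨k, hk, rfl⟩), Or.inr ⟨k, hk, rfl⟩]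
  · rintro ((⟨k, hk, rfl⟩ | ⟨k, hk, rfl⟩) | ⟨k, hk, rfl⟩)
    exacts [⟨(0, k), hk, rfl⟩, ⟨(1, k), hk, rfl⟩, ⟨(2, k), hk, rfl⟩]

theorem leadingRows_three_succ (p q : ℕ) (k : Fin m) :
    leadingRows ![p, q, k.val + 1] = insert (2, k) (leadingRows ![p, q, k.val]) := by
  ext ⟨i, j⟩
  fin_cases i <;> simp [leadingRows, Fin.ext_iff]; omega

theorem leadingRows_three_union (p q r : ℕ) :
    leadingRows (m := m) ![0, q + 1, r] ∪ leadingRows ![p, q, r] = leadingRows ![p, q + 1, r] := by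
  ext ⟨i, j⟩
  fin_cases i <;> simp [leadingRows]; omega

theorem leadingRows_three_inter (p q r : ℕ) :
    leadingRows (m := m) ![0, q + 1, r] ∩ leadingRows ![p, q, r] = leadingRows ![0, q, r] := by
  ext ⟨i, j⟩
  fin_cases i <;> simp [leadingRows]; omega

theorem sup_span_rowSet_eq_top (hM : IsNet 0 m 3 (digitalNet m 3 ![A, B, C])) {p q : ℕ}
    {k : Fin m} (h : p + q + k.val + 1 = m) :
    Submodule.span (ZMod 2) (rowSet A p ∪ rowSet B q ∪ rowSet C k) ⊔
      Submodule.span (ZMod 2) {C k} = ⊤ := by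
  have := span_leadingRows_eq_top hM (d := ![p, q, k.val + 1])
    (by simp [Fin.sum_univ_three]; omega)
  rwa [leadingRows_three_succ, Set.image_insert_eq, image_leadingRows_three,
    Submodule.span_insert, sup_comm] at this

theorem notMem_span_rowSet (hM : IsNet 0 m 3 (digitalNet m 3 ![A, B, C])) {p q : ℕ}
    {k : Fin m} (h : p + q + k.val + 1 = m) :
    C k ∉ Submodule.span (ZMod 2) (rowSet A p ∪ rowSet B q ∪ rowSet C k) := by
  have hind := linearIndepOn_leadingRows hM (d := ![p, q, k.val + 1])
    (by simp [Fin.sum_univ_three]; omega)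
  rw [leadingRows_three_succ] at hind
  have := ((hind.mono (Set.subset_insert _ _)).notMem_span_iff (a := (2, k))).mpr
    ⟨hind, by simp [leadingRows]⟩
  rwa [image_leadingRows_three] at this

theorem span_rowSet_inf (hM : IsNet 0 m 3 (digitalNet m 3 ![A, B, C])) {p q r : ℕ}
    (h : p + q + r + 1 = m) :
    Submodule.span (ZMod 2) (rowSet B (q + 1) ∪ rowSet C r) ⊓
      Submodule.span (ZMod 2) (rowSet A p ∪ rowSet B q ∪ rowSet C r) =
        Submodule.span (ZMod 2) (rowSet B q ∪ rowSet C r) := by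
  have hind := linearIndepOn_leadingRows hM (d := ![p, q + 1, r])
    (by simp [Fin.sum_univ_three]; omega)
  rw [← leadingRows_three_union] at hind
  have := hind.span_image_inter
  rwa [leadingRows_three_inter, image_leadingRows_three, image_leadingRows_three,
    image_leadingRows_three, rowSet_zero, Set.empty_union, Set.empty_union] at this

theorem add_mem_Vsub (hM : IsNet 0 m 3 (digitalNet m 3 ![A, B, C]))
    (hM' : IsNet 0 m 3 (digitalNet m 3 ![A, B, C'])) {k : Fin m}
    (hC : Submodule.span (ZMod 2) (rowSet C k) = Submodule.span (ZMod 2) (rowSet C' k))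
    {p : ℕ} (hp : p + k.val + 1 ≤ m) : C k + C' k ∈ Vsub A B C p k := by
  have h : p + (m - p - k - 1) + k.val + 1 = m := by omega
  have hV : Vsub A B C p k = Submodule.span (ZMod 2)
      (rowSet A p ∪ rowSet B (m - p - k - 1) ∪ rowSet C' k) := by
    rw [Vsub, Submodule.span_union, Submodule.span_union _ (rowSet C' k), hC]
  exact add_mem_of_sup_span_singleton_eq_top (sup_span_rowSet_eq_top hM h)
    (hV ▸ notMem_span_rowSet hM' h)

theorem add_mem_span_rowSet (hM : IsNet 0 m 3 (digitalNet m 3 ![A, B, C]))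
    (hM' : IsNet 0 m 3 (digitalNet m 3 ![A, B, C'])) {k : Fin m}
    (hC : Submodule.span (ZMod 2) (rowSet C k) = Submodule.span (ZMod 2) (rowSet C' k)) :
    C k + C' k ∈ Submodule.span (ZMod 2) (rowSet C k) := by
  have key : ∀ n ≤ m - k - 1,
      C k + C' k ∈ Submodule.span (ZMod 2) (rowSet B (m - k - 1 - n) ∪ rowSet C k) := by
    intro n
    induction n with
    | zero =>
      intro _
      simpa [Vsub, rowSet_zero] using add_mem_Vsub hM hM' hC (p := 0) (by omega)
    | succ n ih =>
      intro hn
      have hB := ih (by omega)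
      have hV := add_mem_Vsub hM hM' hC (p := n + 1) (by omega)
      rw [show m - k - 1 - n = m - k - 1 - (n + 1) + 1 by omega] at hB
      rw [Vsub, show m - (n + 1) - k - 1 = m - k - 1 - (n + 1) by omega] at hV
      rw [← span_rowSet_inf hM (p := n + 1) (by omega)]
      exact ⟨hB, hV⟩
  simpa [rowSet_zero] using key (m - k - 1) le_rfl

theorem span_rowSet_succ_le (hM : IsNet 0 m 3 (digitalNet m 3 ![A, B, C]))
    (hM' : IsNet 0 m 3 (digitalNet m 3 ![A, B, C'])) {k : Fin m}
    (hC : Submodule.span (ZMod 2) (rowSet C k) = Submodule.span (ZMod 2) (rowSet C' k)) :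
    Submodule.span (ZMod 2) (rowSet C' (k + 1)) ≤ Submodule.span (ZMod 2) (rowSet C (k + 1)) := by
  rw [rowSet_succ, rowSet_succ, Submodule.span_insert, Submodule.span_insert, ← hC]
  refine sup_le ((Submodule.span_singleton_le_iff_mem _ _).mpr ?_) le_sup_right
  rw [← zero_add (C' k), ← ZModModule.add_self (C k), add_assoc]
  exact Submodule.add_mem _ (Submodule.mem_sup_left (Submodule.mem_span_singleton_self _))
    (Submodule.mem_sup_right (add_mem_span_rowSet hM hM' hC))

end ThreeMatrices

theorem stmt17_general (m : ℕ) (A B C C' : Matrix (Fin m) (Fin m) (ZMod 2))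
    (h : IsNet 0 m 3 (digitalNet m 3 ![A, B, C]))
    (h' : IsNet 0 m 3 (digitalNet m 3 ![A, B, C'])) :
    ∀ j : ℕ, 1 ≤ j → j ≤ m →
      Submodule.span (ZMod 2) (rowSet C j) = Submodule.span (ZMod 2) (rowSet C' j) := by
  suffices key : ∀ j ≤ m,
      Submodule.span (ZMod 2) (rowSet C j) = Submodule.span (ZMod 2) (rowSet C' j) from
    fun j _ hj => key j hj
  intro j
  induction j with
  | zero => intro _; rw [rowSet_zero, rowSet_zero]
  | succ j ih =>
    intro hj
    have hC := ih (by omega)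
    let k : Fin m := ⟨j, hj⟩
    exact le_antisymm (span_rowSet_succ_le h' h (k := k) hC.symm)
      (span_rowSet_succ_le h h' (k := k) hC)

theorem stmt17 (m : ℕ) (hm : 1 ≤ m) (A B C C' : Matrix (Fin m) (Fin m) (ZMod 2))
    (h : IsNet 0 m 3 (digitalNet m 3 ![A, B, C]))
    (h' : IsNet 0 m 3 (digitalNet m 3 ![A, B, C'])) :
    ∀ j : ℕ, 1 ≤ j → j ≤ m →
      Submodule.span (ZMod 2) (rowSet C j) = Submodule.span (ZMod 2) (rowSet C' j) :=
  stmt17_general m A B C C' h h'
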